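/- arXiv:1903.00916 — 2 statements merged into one kernel-verified Lean document; each statement's English description precedes it below -/
import Mathlib

section
/- Let X be a nonempty set equipped with two metric space structures whose distance functions are d and ρ. Assume (i) for every point p ∈ X there exists r > 0 such that d(x,y) = ρ(x,y) for all x, y in the open ρ-ball of radius r about p, and (ii) ρ is an approximate length metric: for all x, y ∈ X and every ε > 0 there exists a path γ : [0,1] → X with γ(0) = x, γ(1) = y, continuous with respect to ρ, whose total variation with respect to ρ over [0,1] (the supremum over all partitions 0 = t₀ ≤ t₁ ≤ … ≤ t_n = 1 of Σᵢ ρ(γ(t_{i-1}), γ(t_i))) is at most ρ(x,y) + ε. Then d(x,y) ≤ ρ(x,y) for all x, y ∈ X. -/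
/-!
Subdivide a path `γ` from `x` to `y` so finely that consecutive subdivision points lie in a common
ball on which `d = ρ`. The triangle inequality for `d` along the subdivision then gives
`d x y ≤ ∑ ρ(γ tᵢ, γ tᵢ₊₁)`, which is at most `ρ x y + ε` by the choice of `γ`.
-/

section

open Set Metric

lemma le_sum_of_triangle {X : Type*} (d : X → X → ℝ) (hd₀ : ∀ x, d x x = 0)
    (hd : ∀ x y z, d x z ≤ d x y + d y z) (n : ℕ) (f : Fin (n + 1) → X) :
    d (f 0) (f (Fin.last n)) ≤ ∑ i : Fin n, d (f i.castSucc) (f i.succ) := by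
  induction n with
  | zero => simp [hd₀]
  | succ n ih =>
    calc d (f 0) (f (Fin.last (n + 1)))
        ≤ d (f 0) (f (Fin.last n).castSucc) + d (f (Fin.last n).castSucc) (f (Fin.last (n + 1))) :=
          hd _ _ _
      _ ≤ ∑ i : Fin n, d (f i.castSucc.castSucc) (f i.succ.castSucc)
            + d (f (Fin.last n).castSucc) (f (Fin.last (n + 1))) := by
          simpa only [Function.comp_apply, Fin.castSucc_zero, Fin.succ_castSucc]
            using add_le_add_left (ih (f ∘ Fin.castSucc)) _
      _ = ∑ i : Fin (n + 1), d (f i.castSucc) (f i.succ) := by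
          rw [Fin.sum_univ_castSucc, Fin.succ_last]
          simp only [Fin.succ_castSucc]

lemma exists_partition_Icc_dist_lt {η : ℝ} (hη : 0 < η) :
    ∃ n : ℕ, ∃ t : Fin (n + 1) → ℝ, Monotone t ∧ t 0 = 0 ∧ t (Fin.last n) = 1 ∧
      (∀ i, t i ∈ Icc 0 1) ∧ ∀ i : Fin n, dist (t i.castSucc) (t i.succ) < η := by
  obtain ⟨m, hm⟩ := exists_nat_one_div_lt hη
  have hpos : (0 : ℝ) < m + 1 := by positivity
  refine ⟨m + 1, fun i => i / (m + 1), fun i j hij => ?_, by simp, ?_, fun i => ⟨?_, ?_⟩,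
    fun i => ?_⟩
  · dsimp only
    gcongr
    exact_mod_cast hij
  · simp [hpos.ne']
  · positivity
  · rw [div_le_one hpos]
    exact_mod_cast i.is_le
  · rw [dist_comm, Real.dist_eq]
    simp only [Fin.val_succ, Fin.val_castSucc]
    push_cast
    rwa [← sub_div, add_sub_cancel_left, abs_of_pos (by positivity)]

variable {α β : Type*} [PseudoMetricSpace α] [PseudoMetricSpace β]

lemma IsCompact.exists_pos_forall_dist_lt_exists_mem_of_continuousOn {s : Set α}
    (hs : IsCompact s) {f : α → β} (hf : ContinuousOn f s) {ι : Sort*} {c : ι → Set β}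
    (hc : ∀ i, IsOpen (c i)) (hcover : f '' s ⊆ ⋃ i, c i) :
    ∃ η > 0, ∀ x ∈ s, ∀ y ∈ s, dist x y < η → ∃ i, f x ∈ c i ∧ f y ∈ c i := by
  obtain ⟨δ, hδ, hleb⟩ := lebesgue_number_lemma_of_metric (hs.image_of_continuousOn hf) hc hcover
  obtain ⟨η, hη, hfη⟩ :=
    Metric.uniformContinuousOn_iff.mp (hs.uniformContinuousOn_of_continuous hf) δ hδ
  refine ⟨η, hη, fun x hx y hy hxy => ?_⟩
  obtain ⟨i, hi⟩ := hleb (f x) (mem_image_of_mem f hx)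
  exact ⟨i, hi (mem_ball_self hδ), hi (mem_ball'.mpr (hfη x hx y hy hxy))⟩

lemma ContinuousOn.exists_partition_forall_mem {γ : ℝ → β} (hγ : ContinuousOn γ (Icc 0 1))
    {ι : Sort*} {c : ι → Set β} (hc : ∀ i, IsOpen (c i)) (hcover : γ '' Icc 0 1 ⊆ ⋃ i, c i) :
    ∃ n : ℕ, ∃ t : Fin (n + 1) → ℝ, Monotone t ∧ t 0 = 0 ∧ t (Fin.last n) = 1 ∧
      ∀ i : Fin n, ∃ j, γ (t i.castSucc) ∈ c j ∧ γ (t i.succ) ∈ c j := by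
  obtain ⟨η, hη, hcommon⟩ :=
    isCompact_Icc.exists_pos_forall_dist_lt_exists_mem_of_continuousOn hγ hc hcover
  obtain ⟨n, t, hmono, h0, h1, hmem, hmesh⟩ := exists_partition_Icc_dist_lt hη
  exact ⟨n, t, hmono, h0, h1, fun i => hcommon _ (hmem _) _ (hmem _) (hmesh i)⟩

lemma ContinuousOn.exists_partition_le_sum_dist {γ : ℝ → β} (hγ : ContinuousOn γ (Icc 0 1))
    (d : β → β → ℝ) (hd₀ : ∀ x, d x x = 0) (hd : ∀ x y z, d x z ≤ d x y + d y z)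
    (hloc : ∀ p, ∃ r > 0, ∀ x y, dist x p < r → dist y p < r → d x y = dist x y) :
    ∃ n : ℕ, ∃ t : Fin (n + 1) → ℝ, Monotone t ∧ t 0 = 0 ∧ t (Fin.last n) = 1 ∧
      d (γ 0) (γ 1) ≤ ∑ i : Fin n, dist (γ (t i.castSucc)) (γ (t i.succ)) := by
  choose r hr hlocal using hloc
  obtain ⟨n, t, hmono, h0, h1, hsmall⟩ :=
    hγ.exists_partition_forall_mem (c := fun p => ball p (r p)) (fun _ => isOpen_ball)
      fun z _ => mem_iUnion.mpr ⟨z, mem_ball_self (hr z)⟩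
  refine ⟨n, t, hmono, h0, h1, ?_⟩
  calc d (γ 0) (γ 1) = d (γ (t 0)) (γ (t (Fin.last n))) := by rw [h0, h1]
    _ ≤ ∑ i : Fin n, d (γ (t i.castSucc)) (γ (t i.succ)) := le_sum_of_triangle d hd₀ hd n (γ ∘ t)
    _ = ∑ i : Fin n, dist (γ (t i.castSucc)) (γ (t i.succ)) := by
      refine Finset.sum_congr rfl fun i _ => ?_
      obtain ⟨p, hx, hy⟩ := hsmall i
      exact hlocal p _ _ hx hy

end

theorem dist_le_of_locally_compatible_length_metric_general
    {X : Type*} (m₁ m₂ : MetricSpace X)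
    (hloc : ∀ p : X, ∃ r > 0, ∀ x y : X,
      @dist X m₂.toDist x p < r → @dist X m₂.toDist y p < r →
      @dist X m₁.toDist x y = @dist X m₂.toDist x y)
    (hlen : ∀ x y : X, ∀ ε > (0 : ℝ), ∃ γ : ℝ → X,
      γ 0 = x ∧ γ 1 = y ∧
      @ContinuousOn ℝ X _ m₂.toUniformSpace.toTopologicalSpace γ (Set.Icc 0 1) ∧
      ∀ n : ℕ, ∀ t : Fin (n + 1) → ℝ, Monotone t → t 0 = 0 → t (Fin.last n) = 1 →
        ∑ i : Fin n, @dist X m₂.toDist (γ (t i.castSucc)) (γ (t i.succ)) ≤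
          @dist X m₂.toDist x y + ε) :
    ∀ x y : X, @dist X m₁.toDist x y ≤ @dist X m₂.toDist x y := by
  let := m₂
  intro x y
  refine le_of_forall_pos_le_add fun ε hε => ?_
  obtain ⟨γ, rfl, rfl, hγ, hvar⟩ := hlen x y ε hε
  obtain ⟨n, t, hmono, h0, h1, hle⟩ :=
    hγ.exists_partition_le_sum_dist (@dist X m₁.toDist) (@dist_self X m₁.toPseudoMetricSpace)
      (@dist_triangle X m₁.toPseudoMetricSpace) hloc
  exact hle.trans (hvar n t hmono h0 h1)

/-- If `ρ` is an approximate length metric and `d` agrees with `ρ` on a small `ρ`-ball around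
every point, then `d ≤ ρ`. -/
theorem dist_le_of_locally_compatible_length_metric
    {X : Type*} [Nonempty X] (m₁ m₂ : MetricSpace X)
    (hloc : ∀ p : X, ∃ r > 0, ∀ x y : X,
      @dist X m₂.toDist x p < r → @dist X m₂.toDist y p < r →
      @dist X m₁.toDist x y = @dist X m₂.toDist x y)
    (hlen : ∀ x y : X, ∀ ε > (0 : ℝ), ∃ γ : ℝ → X,
      γ 0 = x ∧ γ 1 = y ∧
      @ContinuousOn ℝ X _ m₂.toUniformSpace.toTopologicalSpace γ (Set.Icc 0 1) ∧
      ∀ n : ℕ, ∀ t : Fin (n + 1) → ℝ, Monotone t → t 0 = 0 → t (Fin.last n) = 1 →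
        ∑ i : Fin n, @dist X m₂.toDist (γ (t i.castSucc)) (γ (t i.succ)) ≤
          @dist X m₂.toDist x y + ε) :
    ∀ x y : X, @dist X m₁.toDist x y ≤ @dist X m₂.toDist x y :=
  dist_le_of_locally_compatible_length_metric_general m₁ m₂ hloc hlen
end

section
/- Let X be a nonempty set equipped with two metric space structures whose distance functions are d and ρ. Assume (i) d(x,y) ≤ ρ(x,y) for all x, y ∈ X, (ii) S ⊆ X is nonempty and compact with respect to the topology induced by d, and (iii) for every p ∈ S there exists r_p > 0 such that d(x,y) = ρ(x,y) for all x, y in the open d-ball of radius 4·r_p about p. Then there exists a > 0 such that for every x ∈ X with inf_{s ∈ S} d(x,s) < a, one has inf_{s ∈ S} d(x,s) = inf_{s ∈ S} ρ(x,s). -/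
/-- If `d ≤ ρ`, `S` is nonempty and `d`-compact, and around every point of `S` there is a
`d`-ball of radius `4 r` on which `d = ρ`, then the `d`-distance and `ρ`-distance to `S`
agree at all points whose `d`-distance to `S` is smaller than some `a > 0`. -/
theorem infDist_eq_of_locally_compatible_near_compact
    {X : Type*} (m₁ m₂ : MetricSpace X)
    (hle : ∀ x y : X, @dist X m₁.toDist x y ≤ @dist X m₂.toDist x y)
    (S : Set X) (hS_ne : S.Nonempty)
    (hS_cpt : @IsCompact X m₁.toUniformSpace.toTopologicalSpace S)
    (hloc : ∀ p ∈ S, ∃ r > (0 : ℝ), ∀ x y : X,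
      @dist X m₁.toDist x p < 4 * r → @dist X m₁.toDist y p < 4 * r →
      @dist X m₁.toDist x y = @dist X m₂.toDist x y) :
    ∃ a > (0 : ℝ), ∀ x : X, (⨅ s : S, @dist X m₁.toDist x (s : X)) < a →
      (⨅ s : S, @dist X m₁.toDist x (s : X)) = (⨅ s : S, @dist X m₂.toDist x (s : X)) := by
  letI := m₁
  haveI : Nonempty S := hS_ne.to_subtype
  choose! r hr0 hr4 using hloc
  -- cover S by balls of radius r p
  obtain ⟨t, htS, htcov⟩ := hS_cpt.elim_nhds_subcover (fun p => Metric.ball p (r p))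
    (fun p hp => Metric.ball_mem_nhds p (hr0 p hp))
  have htne : t.Nonempty := by
    obtain ⟨s, hs⟩ := hS_ne
    obtain ⟨p, hp, _⟩ := Set.mem_iUnion₂.1 (htcov hs)
    exact ⟨p, hp⟩
  set a := t.inf' htne r with ha
  have ha0 : 0 < a := by
    rw [ha, Finset.lt_inf'_iff]
    exact fun p hp => hr0 p (htS p hp)
  refine ⟨a, ha0, fun x hx => ?_⟩
  have bdd1 : BddBelow (Set.range fun s : S => dist x (s : X)) :=
    ⟨0, by rintro _ ⟨s, rfl⟩; exact dist_nonneg⟩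
  have bdd2 : BddBelow (Set.range fun s : S => @dist X m₂.toDist x (s : X)) :=
    ⟨0, by rintro _ ⟨s, rfl⟩; exact @dist_nonneg X m₂.toPseudoMetricSpace _ _⟩
  refine le_antisymm (le_ciInf fun s => (ciInf_le bdd1 s).trans (hle x s)) ?_
  set D := ⨅ s : S, dist x (s : X) with hD
  refine le_of_forall_pos_le_add fun ε hε => ?_
  set ε' := min ε ((a - D) / 2) with hε'
  have hε'0 : 0 < ε' := lt_min hε (by linarith)
  have hDa : D + ε' < a := by
    have : ε' ≤ (a - D) / 2 := min_le_right _ _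
    linarith
  obtain ⟨⟨s, hsS⟩, hs⟩ := exists_lt_of_ciInf_lt (show D < D + ε' by linarith)
  simp only at hs
  obtain ⟨p, hpt, hps⟩ := Set.mem_iUnion₂.1 (htcov hsS)
  have hpS : p ∈ S := htS p hpt
  have hap : a ≤ r p := Finset.inf'_le r hpt
  have hsp : dist s p < r p := Metric.mem_ball.1 hps
  have hxp : dist x p < 4 * r p := by
    have := dist_triangle x s p
    have h0 := hr0 p hpS
    nlinarith [hs.trans hDa]
  have heq : dist x s = @dist X m₂.toDist x s :=
    hr4 p hpS x s hxp (by have h0 := hr0 p hpS; nlinarith)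
  calc (⨅ s : S, @dist X m₂.toDist x (s : X)) ≤ @dist X m₂.toDist x s :=
        ciInf_le bdd2 ⟨s, hsS⟩
    _ = dist x s := heq.symm
    _ ≤ D + ε' := le_of_lt hs
    _ ≤ D + ε := by have := min_le_left ε ((a - D) / 2); linarith
end
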